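/- Let K be a field, Xᵢ, Yᵢ ⊆ K finite with Yᵢ ⊆ Xᵢ, P = (∏Xᵢ)\(∏Yᵢ), aᵢ = |Xᵢ|, bᵢ = |Yᵢ|. Then the set of standard monomials of the vanishing ideal I(P) (with respect to any admissible ordering) is {x^α : α ∈ ∏ᵢ[0,aᵢ) and α ∉ ∏ᵢ[aᵢ−bᵢ, aᵢ)}; in particular it has size ∏aᵢ − ∏bᵢ = |P|. -/

import Mathlib

/-- A finite set `A ⊆ K` is `lam`-null: the coefficients of `∏_{a∈A}(x-a)` in
degrees `|A|-lam, …, |A|-1` vanish. -/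
def IsNull {K : Type*} [Field K] (lam : ℕ) (A : Finset K) : Prop :=
  ∀ b : ℕ, A.card - lam ≤ b → b < A.card →
    (∏ a ∈ A, (Polynomial.X - Polynomial.C a)).coeff b = 0

/-- A multivariate polynomial is `lam`-lacunary. -/
def MvLacunary {K : Type*} [CommSemiring K] {n : ℕ} (lam : Fin n → ℕ)
    (g : MvPolynomial (Fin n) K) : Prop :=
  ∃ μ ∈ g.support, ∀ ν ∈ g.support, ∀ i, ν i + lam i < μ i ∨ ν i = μ i

/-- An admissible monomial ordering: total order compatible with addition
and refining coordinatewise divisibility. -/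
def Admissible {n : ℕ} (ord : LinearOrder (Fin n →₀ ℕ)) : Prop :=
  (∀ a b c : Fin n →₀ ℕ, ord.le a b → ord.le (a + c) (b + c)) ∧
  (∀ a b : Fin n →₀ ℕ, (∀ i, a i ≤ b i) → ord.le a b)

/-- Leading exponent of a nonzero polynomial w.r.t. an ordering. -/
noncomputable def leadExp {K : Type*} [CommSemiring K] {n : ℕ}
    (ord : LinearOrder (Fin n →₀ ℕ)) (g : MvPolynomial (Fin n) K) (hg : g ≠ 0) :
    Fin n →₀ ℕ :=
  @Finset.max' _ ord g.support (MvPolynomial.support_nonempty.mpr hg)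

/-- The vanishing ideal of a set of points. -/
noncomputable def vanishingIdealOn {K : Type*} [Field K] {n : ℕ} (X : Set (Fin n → K)) :
    Ideal (MvPolynomial (Fin n) K) where
  carrier := {f | ∀ x ∈ X, MvPolynomial.eval x f = 0}
  add_mem' := by intro a b ha hb x hx; simp [ha x hx, hb x hx]
  zero_mem' := by intro x hx; simp
  smul_mem' := by intro c a ha x hx; simp [smul_eq_mul, ha x hx]

/-- `B` is a Gröbner basis of `I` w.r.t. `ord`. -/
def IsGroebner {K : Type*} [Field K] {n : ℕ} (ord : LinearOrder (Fin n →₀ ℕ))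
    (B : Set (MvPolynomial (Fin n) K)) (I : Ideal (MvPolynomial (Fin n) K)) : Prop :=
  Ideal.span B = I ∧
  ∀ f, f ∈ I → ∀ hf : f ≠ 0, ∃ g ∈ B, ∃ hg : g ≠ 0,
    ∀ i, leadExp ord g hg i ≤ leadExp ord f hf i

/-- Standard monomials of an ideal `J`: exponents not divisible by the leading
monomial of any nonzero element of `J`. -/
def stdMon {K : Type*} [Field K] {n : ℕ} (ord : LinearOrder (Fin n →₀ ℕ))
    (J : Ideal (MvPolynomial (Fin n) K)) : Set (Fin n →₀ ℕ) :=
  {α | ∀ g ∈ J, ∀ hg : g ≠ 0, ¬ ∀ i, leadExp ord g hg i ≤ α i}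

/-- `f` has a zero of multiplicity ≥ t at `c`: `f(x + c) ∈ ⟨x₁,…,xₙ⟩^t`. -/
def HasMultZero {K : Type*} [Field K] {n : ℕ} (t : ℕ) (c : Fin n → K)
    (f : MvPolynomial (Fin n) K) : Prop :=
  MvPolynomial.eval₂Hom MvPolynomial.C
      (fun i => MvPolynomial.X i + MvPolynomial.C (c i)) f ∈
    (Ideal.span (Set.range (MvPolynomial.X : Fin n → MvPolynomial (Fin n) K))) ^ t

open MvPolynomial

lemma aux_wf {n : ℕ} (ord : LinearOrder (Fin n →₀ ℕ)) (hadm : Admissible ord) :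
    WellFounded ord.lt := by
  rw [RelEmbedding.wellFounded_iff_isEmpty]
  constructor
  intro f
  have hwo : ∀ _i : Fin n, IsWellOrder ℕ (· < ·) := fun _ => inferInstance
  obtain ⟨m, k, hmk, hle⟩ := (Set.isPWO_of_wellQuasiOrderedLE
    (Set.univ : Set (Fin n → ℕ))).exists_lt (f := fun j => ⇑(f j)) (fun _ => Set.mem_univ _)
  have h1 : ord.le (f m) (f k) := hadm.2 _ _ fun i => hle i
  have h2 : ord.lt (f k) (f m) := f.map_rel_iff.mpr hmk
  exact @not_lt_of_ge _ ord.toPreorder _ _ h1 h2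

lemma leadExp_mem {K : Type*} [CommSemiring K] {n : ℕ}
    (ord : LinearOrder (Fin n →₀ ℕ)) (g : MvPolynomial (Fin n) K) (hg : g ≠ 0) :
    leadExp ord g hg ∈ g.support :=
  @Finset.max'_mem _ ord _ _

lemma le_leadExp {K : Type*} [CommSemiring K] {n : ℕ}
    (ord : LinearOrder (Fin n →₀ ℕ)) (g : MvPolynomial (Fin n) K) (hg : g ≠ 0)
    {μ : Fin n →₀ ℕ} (hμ : μ ∈ g.support) : ord.le μ (leadExp ord g hg) :=
  @Finset.le_max' _ ord _ _ hμ

lemma leadExp_eq_of {K : Type*} [CommSemiring K] {n : ℕ}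
    (ord : LinearOrder (Fin n →₀ ℕ)) (g : MvPolynomial (Fin n) K) (hg : g ≠ 0)
    {d : Fin n →₀ ℕ} (hd : d ∈ g.support) (h : ∀ μ ∈ g.support, ord.le μ d) :
    leadExp ord g hg = d :=
  @le_antisymm _ ord.toPartialOrder _ _ (h _ (leadExp_mem ord g hg))
    (le_leadExp ord g hg hd)

lemma aux_coeff_mul {K : Type*} [CommSemiring K] {n : ℕ}
    {f g : MvPolynomial (Fin n) K} {df dg : Fin n →₀ ℕ}
    (hf : ∀ μ ∈ f.support, ∀ i, μ i ≤ df i) (hg : ∀ μ ∈ g.support, ∀ i, μ i ≤ dg i) :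
    coeff (df + dg) (f * g) = coeff df f * coeff dg g := by
  rw [coeff_mul]
  apply Finset.sum_eq_single (df, dg)
  · rintro ⟨u, v⟩ huv hne
    rw [Finset.HasAntidiagonal.mem_antidiagonal] at huv
    by_contra hc
    have hu : u ∈ f.support := by
      rw [mem_support_iff]; intro h0; apply hc; rw [h0, zero_mul]
    have hv : v ∈ g.support := by
      rw [mem_support_iff]; intro h0; apply hc; rw [h0, mul_zero]
    have : u = df ∧ v = dg := by
      have h1 := hf u hu; have h2 := hg v hv
      have h3 : ∀ i, u i + v i = df i + dg i := fun i => by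
        have := DFunLike.congr_fun huv i; simpa using this
      constructor <;> ext i <;> [skip; skip] <;>
        · have := h1 i; have := h2 i; have := h3 i; omega
    exact hne (Prod.ext this.1 this.2)
  · intro h; simp at h

lemma aux_prod {K : Type*} [CommSemiring K] {n : ℕ} {ι : Type*}
    (s : Finset ι) (f : ι → MvPolynomial (Fin n) K) (e : ι → (Fin n →₀ ℕ))
    (h : ∀ j ∈ s, ∀ μ ∈ (f j).support, ∀ i, μ i ≤ e j i) :
    (∀ μ ∈ (∏ j ∈ s, f j).support, ∀ i, μ i ≤ (∑ j ∈ s, e j) i) ∧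
    coeff (∑ j ∈ s, e j) (∏ j ∈ s, f j) = ∏ j ∈ s, coeff (e j) (f j) := by
  classical
  induction s using Finset.cons_induction with
  | empty =>
    refine ⟨fun μ hμ i => ?_, by simp⟩
    rw [Finset.prod_empty, mem_support_iff, coeff_one] at hμ
    simp only [Finset.sum_empty, Finsupp.coe_zero, Pi.zero_apply]
    by_contra hne
    exact hμ (by rw [if_neg]; intro h0; apply hne; rw [← h0]; rfl)
  | cons a s ha IH =>
    obtain ⟨IH1, IH2⟩ := IH (fun j hj => h j (Finset.mem_cons_of_mem hj))
    rw [Finset.prod_cons, Finset.sum_cons]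
    constructor
    · intro μ hμ i
      have := MvPolynomial.support_mul _ _ hμ
      rw [Finset.mem_add] at this
      obtain ⟨u, hu, v, hv, rfl⟩ := this
      have := h a (Finset.mem_cons_self a s) u hu i
      have := IH1 v hv i
      simp only [Finsupp.add_apply, Finsupp.coe_add, Pi.add_apply] at *
      omega
    · rw [aux_coeff_mul (h a (Finset.mem_cons_self a s)) IH1, IH2, Finset.prod_cons]


noncomputable def gridPoly {K : Type*} [Field K] {n : ℕ} (A : Fin n → Finset K) :
    MvPolynomial (Fin n) K :=
  ∏ i, ∏ c ∈ A i, (X i - C c)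

noncomputable def gridDeg {n : ℕ} (A : Fin n → ℕ) : Fin n →₀ ℕ :=
  ∑ i, Finsupp.single i (A i)

lemma gridDeg_apply {n : ℕ} (A : Fin n → ℕ) (j : Fin n) : gridDeg A j = A j := by
  classical
  rw [gridDeg, Finsupp.finset_sum_apply]
  simp [Finsupp.single_apply]

lemma gridPoly_spec {K : Type*} [Field K] {n : ℕ} (A : Fin n → Finset K) :
    (∀ μ ∈ (gridPoly A).support, ∀ i, μ i ≤ (A i).card) ∧
    coeff (gridDeg fun i => (A i).card) (gridPoly A) = 1 := by
  classical
  have inner : ∀ i : Fin n,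
      (∀ μ ∈ (∏ c ∈ A i, (X i - C c : MvPolynomial (Fin n) K)).support,
        ∀ j, μ j ≤ Finsupp.single i ((A i).card) j) ∧
      coeff (Finsupp.single i ((A i).card)) (∏ c ∈ A i, (X i - C c)) = 1 := by
    intro i
    have hb : ∀ c ∈ A i, ∀ μ ∈ (X i - C c : MvPolynomial (Fin n) K).support,
        ∀ j, μ j ≤ Finsupp.single i 1 j := by
      intro c _ μ hμ j
      rw [mem_support_iff] at hμ
      have hco : coeff μ (X i - C c : MvPolynomial (Fin n) K) =
          (if Finsupp.single i 1 = μ then 1 else 0) - (if 0 = μ then c else 0) := by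
        rw [coeff_sub, coeff_X', coeff_C]
      by_cases h1 : Finsupp.single i 1 = μ
      · rw [← h1]
      · by_cases h0 : (0 : Fin n →₀ ℕ) = μ
        · rw [← h0]; simp
        · exfalso; apply hμ; rw [hco, if_neg h1, if_neg h0]; ring
    have := aux_prod (A i) (fun c => (X i - C c : MvPolynomial (Fin n) K))
      (fun _ => Finsupp.single i 1) hb
    have hsum : (∑ _c ∈ A i, Finsupp.single i (1 : ℕ)) = Finsupp.single i ((A i).card) := by
      rw [Finset.sum_const]; ext j; simp [mul_comm]
    rw [hsum] at this
    refine ⟨this.1, ?_⟩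
    rw [this.2]
    apply Finset.prod_eq_one
    intro c _
    rw [coeff_sub, coeff_X', coeff_C, if_pos rfl, if_neg, sub_zero]
    intro h0
    have := DFunLike.congr_fun h0 i
    simp at this
  have := aux_prod Finset.univ (fun i => ∏ c ∈ A i, (X i - C c : MvPolynomial (Fin n) K))
    (fun i => Finsupp.single i ((A i).card)) (fun j _ => (inner j).1)
  beta_reduce at this
  rw [← gridPoly, ← gridDeg] at this
  constructor
  · intro μ hμ i
    have h := this.1 μ hμ i
    rwa [gridDeg_apply] at h
  · rw [this.2]
    exact Finset.prod_eq_one fun i _ => (inner i).2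

lemma gridPoly_ne_zero {K : Type*} [Field K] {n : ℕ} (A : Fin n → Finset K) :
    gridPoly A ≠ 0 := by
  intro h
  have := (gridPoly_spec A).2
  rw [h, coeff_zero] at this
  exact one_ne_zero this.symm

lemma gridPoly_leadExp {K : Type*} [Field K] {n : ℕ} (A : Fin n → Finset K)
    (ord : LinearOrder (Fin n →₀ ℕ)) (hadm : Admissible ord) :
    leadExp ord (gridPoly A) (gridPoly_ne_zero A) = gridDeg fun i => (A i).card := by
  apply leadExp_eq_of
  · rw [mem_support_iff, (gridPoly_spec A).2]; exact one_ne_zero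
  · intro μ hμ
    exact hadm.2 _ _ fun i => by rw [gridDeg_apply]; exact (gridPoly_spec A).1 μ hμ i

lemma gridPoly_eval {K : Type*} [Field K] {n : ℕ} (A : Fin n → Finset K)
    (z : Fin n → K) (hz : ∃ i, z i ∈ A i) :
    eval z (gridPoly A) = 0 := by
  obtain ⟨i, hi⟩ := hz
  rw [gridPoly, map_prod]
  apply Finset.prod_eq_zero (Finset.mem_univ i)
  rw [map_prod]
  apply Finset.prod_eq_zero hi
  simp


lemma aux_span {K : Type*} [Field K] {n : ℕ} (ord : LinearOrder (Fin n →₀ ℕ))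
    (hadm : Admissible ord) (J : Ideal (MvPolynomial (Fin n) K))
    (f : MvPolynomial (Fin n) K) :
    ∃ r, f - r ∈ J ∧ ∀ μ ∈ r.support, μ ∈ stdMon ord J := by
  classical
  suffices H : ∀ β : Fin n →₀ ℕ, ∀ f : MvPolynomial (Fin n) K, ∀ hf : f ≠ 0,
      leadExp ord f hf = β → ∃ r, f - r ∈ J ∧ ∀ μ ∈ r.support, μ ∈ stdMon ord J by
    by_cases hf : f = 0
    · exact ⟨0, by simp [hf], by simp⟩
    · exact H _ f hf rfl
  intro β
  refine (aux_wf ord hadm).induction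
    (C := fun β => ∀ f : MvPolynomial (Fin n) K, ∀ hf : f ≠ 0, leadExp ord f hf = β →
      ∃ r, f - r ∈ J ∧ ∀ μ ∈ r.support, μ ∈ stdMon ord J) β ?_
  clear β f
  intro β IH f hf hβ
  have hβsupp : β ∈ f.support := hβ ▸ leadExp_mem ord f hf
  have hcne : coeff β f ≠ 0 := mem_support_iff.mp hβsupp
  set c := coeff β f with hc
  have hmax : ∀ μ ∈ f.support, ord.le μ β := fun μ hμ => hβ ▸ le_leadExp ord f hf hμ
  by_cases hβs : β ∈ stdMon ord J
  · set f' := f - monomial β c with hf'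
    have hβ0 : coeff β f' = 0 := by simp [hf', coeff_monomial, hc]
    have hsup : ∀ μ ∈ f'.support, ord.le μ β ∧ μ ≠ β := by
      intro μ hμ
      have hne : μ ≠ β := fun hne => mem_support_iff.mp (hne ▸ hμ) hβ0
      have : coeff μ f' = coeff μ f := by
        rw [hf', coeff_sub, coeff_monomial, if_neg (fun h => hne h.symm), sub_zero]
      refine ⟨hmax μ ?_, hne⟩
      rw [mem_support_iff, ← this]
      exact mem_support_iff.mp hμ
    by_cases hf0 : f' = 0
    · refine ⟨f, by simp, ?_⟩
      have hfm : f = monomial β c := by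
        have := sub_eq_zero.mp hf0; exact this
      intro μ hμ
      rw [hfm, support_monomial, if_neg hcne, Finset.mem_singleton] at hμ
      rwa [hμ]
    · have hlt : ord.lt (leadExp ord f' hf0) β := by
        have h1 := hsup _ (leadExp_mem ord f' hf0)
        exact @lt_of_le_of_ne _ ord.toPartialOrder _ _ h1.1 h1.2
      obtain ⟨r', hr1, hr2⟩ := IH _ hlt f' hf0 rfl
      refine ⟨r' + monomial β c, ?_, ?_⟩
      · have heq : f - (r' + monomial β c) = f' - r' := by rw [hf']; ring
        rw [heq]; exact hr1
      · intro μ hμ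
        rcases Finset.mem_union.mp (MvPolynomial.support_add hμ) with h1 | h1
        · exact hr2 μ h1
        · rw [support_monomial, if_neg hcne, Finset.mem_singleton] at h1
          rwa [h1]
  · simp only [stdMon, Set.mem_setOf_eq] at hβs
    push_neg at hβs
    obtain ⟨g, hgJ, hg0, hgle⟩ := hβs
    set γ := leadExp ord g hg0 with hγ
    set δ := β - γ with hδ
    have hδγ : δ + γ = β := by
      ext i
      have := hgle i
      simp only [hδ, Finsupp.coe_add, Pi.add_apply, Finsupp.tsub_apply]
      omega
    have hlcg : coeff γ g ≠ 0 := mem_support_iff.mp (leadExp_mem ord g hg0)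
    set e := c / coeff γ g with he
    have hene : e ≠ 0 := div_ne_zero hcne hlcg
    set h := f - monomial δ e * g with hh
    have hfh : f - h = monomial δ e * g := by rw [hh]; ring
    have hcoefh : coeff β h = 0 := by
      rw [hh, coeff_sub, ← hδγ, coeff_monomial_mul, he, div_mul_cancel₀ _ hlcg,
        hδγ, ← hc, sub_self]
    have hsuph : ∀ μ ∈ h.support, ord.le μ β ∧ μ ≠ β := by
      intro μ hμ
      have hne : μ ≠ β := fun hne => mem_support_iff.mp (hne ▸ hμ) hcoefh
      refine ⟨?_, hne⟩
      rcases Finset.mem_union.mp (MvPolynomial.support_sub _ _ _ hμ) with h1 | h1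
      · exact hmax μ h1
      · have h2 := MvPolynomial.support_mul _ _ h1
        rw [Finset.mem_add] at h2
        obtain ⟨u, hu, v, hv, rfl⟩ := h2
        have hu' : u = δ := Finset.mem_singleton.mp (support_monomial_subset hu)
        have hvle : ord.le v γ := le_leadExp ord g hg0 hv
        have := hadm.1 v γ δ hvle
        rw [hu', show δ + v = v + δ from add_comm _ _, ← hδγ,
          show δ + γ = γ + δ from add_comm _ _]
        exact this
    by_cases hh0 : h = 0
    · refine ⟨0, ?_, by simp⟩
      rw [sub_zero]
      have hfg : f = monomial δ e * g := by rw [← hfh, hh0, sub_zero]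
      rw [hfg]; exact J.mul_mem_left _ hgJ
    · have hlt : ord.lt (leadExp ord h hh0) β := by
        have h1 := hsuph _ (leadExp_mem ord h hh0)
        exact @lt_of_le_of_ne _ ord.toPartialOrder _ _ h1.1 h1.2
      obtain ⟨r, hr1, hr2⟩ := IH _ hlt h hh0 rfl
      refine ⟨r, ?_, hr2⟩
      have heq : f - r = (f - h) + (h - r) := by ring
      rw [heq, hfh]
      exact J.add_mem (J.mul_mem_left _ hgJ) hr1

lemma aux_S {n : ℕ} (a b : Fin n → ℕ) (hba : ∀ i, b i ≤ a i) :
    {α : Fin n →₀ ℕ | (∀ i, α i < a i) ∧ ¬ ∀ i, (a i - b i ≤ α i ∧ α i < a i)}.Finite ∧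
    {α : Fin n →₀ ℕ | (∀ i, α i < a i) ∧ ¬ ∀ i, (a i - b i ≤ α i ∧ α i < a i)}.ncard =
      ∏ i, a i - ∏ i, b i := by
  classical
  set boxF : Finset (Fin n →₀ ℕ) :=
    (Fintype.piFinset fun i => Finset.range (a i)).map
      Finsupp.equivFunOnFinite.symm.toEmbedding with hboxF
  set topF : Finset (Fin n →₀ ℕ) :=
    (Fintype.piFinset fun i => Finset.Ico (a i - b i) (a i)).map
      Finsupp.equivFunOnFinite.symm.toEmbedding with htopF
  have hmem_box : ∀ α : Fin n →₀ ℕ, α ∈ boxF ↔ ∀ i, α i < a i := by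
    intro α
    rw [hboxF, Finset.mem_map]
    constructor
    · rintro ⟨g, hg, rfl⟩ i
      have := Fintype.mem_piFinset.mp hg i
      simpa [Finset.mem_range] using this
    · intro hα
      exact ⟨fun i => α i, Fintype.mem_piFinset.mpr fun i => Finset.mem_range.mpr (hα i),
        by simp⟩
  have hmem_top : ∀ α : Fin n →₀ ℕ, α ∈ topF ↔ ∀ i, (a i - b i ≤ α i ∧ α i < a i) := by
    intro α
    rw [htopF, Finset.mem_map]
    constructor
    · rintro ⟨g, hg, rfl⟩ i
      have := Fintype.mem_piFinset.mp hg i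
      simpa [Finset.mem_Ico] using this
    · intro hα
      exact ⟨fun i => α i,
        Fintype.mem_piFinset.mpr fun i => Finset.mem_Ico.mpr ⟨(hα i).1, (hα i).2⟩, by simp⟩
  have hsets : {α : Fin n →₀ ℕ | (∀ i, α i < a i) ∧ ¬ ∀ i, (a i - b i ≤ α i ∧ α i < a i)} =
      ↑(boxF \ topF) := by
    ext α
    simp only [Set.mem_setOf_eq, Finset.coe_sdiff, Set.mem_diff, Finset.mem_coe,
      hmem_box, hmem_top]
  have hsub : topF ⊆ boxF := fun α hα => (hmem_box α).mpr fun i => ((hmem_top α).mp hα i).2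
  have hboxcard : boxF.card = ∏ i, a i := by
    rw [hboxF, Finset.card_map, Fintype.card_piFinset]
    simp
  have htopcard : topF.card = ∏ i, b i := by
    rw [htopF, Finset.card_map, Fintype.card_piFinset]
    apply Finset.prod_congr rfl
    intro i _
    rw [Nat.card_Ico]
    have := hba i; omega
  refine ⟨hsets ▸ (boxF \ topF).finite_toSet, ?_⟩
  rw [hsets, Set.ncard_coe_finset, Finset.card_sdiff_of_subset hsub, hboxcard, htopcard]

lemma aux_P {K : Type*} [Field K] {n : ℕ} (X Y : Fin n → Finset K)
    (hYX : ∀ i, Y i ⊆ X i) :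
    {z : Fin n → K | (∀ i, z i ∈ X i) ∧ ¬ ∀ i, z i ∈ Y i}.ncard =
      ∏ i, (X i).card - ∏ i, (Y i).card := by
  classical
  have hsets : {z : Fin n → K | (∀ i, z i ∈ X i) ∧ ¬ ∀ i, z i ∈ Y i} =
      ↑(Fintype.piFinset X \ Fintype.piFinset Y) := by
    ext z
    simp [Fintype.mem_piFinset]
  rw [hsets, Set.ncard_coe_finset,
    Finset.card_sdiff_of_subset (Fintype.piFinset_subset _ _ fun i => hYX i),
    Fintype.card_piFinset, Fintype.card_piFinset]


lemma mem_vanishingIdealOn {K : Type*} [Field K] {n : ℕ} {S : Set (Fin n → K)}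
    {f : MvPolynomial (Fin n) K} : f ∈ vanishingIdealOn S ↔ ∀ x ∈ S, eval x f = 0 :=
  Iff.rfl

lemma aux_upper {K : Type*} [Field K] {n : ℕ} (X Y : Fin n → Finset K)
    (hYX : ∀ i, Y i ⊆ X i) (ord : LinearOrder (Fin n →₀ ℕ)) (hadm : Admissible ord) :
    stdMon ord (vanishingIdealOn {z | (∀ i, z i ∈ X i) ∧ ¬ (∀ i, z i ∈ Y i)}) ⊆
      {α : Fin n →₀ ℕ | (∀ i, α i < (X i).card) ∧
        ¬ ∀ i, ((X i).card - (Y i).card ≤ α i ∧ α i < (X i).card)} := by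
  classical
  intro α hα
  constructor
  · intro i
    by_contra hge
    push_neg at hge
    set A : Fin n → Finset K := fun j => if j = i then X i else ∅ with hA
    have hmem : gridPoly A ∈ vanishingIdealOn
        {z : Fin n → K | (∀ i, z i ∈ X i) ∧ ¬ (∀ i, z i ∈ Y i)} := by
      rw [mem_vanishingIdealOn]
      intro z hz
      apply gridPoly_eval
      exact ⟨i, by rw [hA]; simp only [if_pos rfl]; exact hz.1 i⟩
    apply hα (gridPoly A) hmem (gridPoly_ne_zero A)
    intro j
    rw [gridPoly_leadExp A ord hadm, gridDeg_apply]
    by_cases hji : j = i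
    · subst hji; rw [hA]; simpa using hge
    · rw [hA]; simp [hji]
  · intro htop
    set A : Fin n → Finset K := fun i => X i \ Y i with hA
    have hmem : gridPoly A ∈ vanishingIdealOn
        {z : Fin n → K | (∀ i, z i ∈ X i) ∧ ¬ (∀ i, z i ∈ Y i)} := by
      rw [mem_vanishingIdealOn]
      intro z hz
      apply gridPoly_eval
      obtain ⟨i, hi⟩ := not_forall.mp hz.2
      exact ⟨i, by rw [hA]; exact Finset.mem_sdiff.mpr ⟨hz.1 i, hi⟩⟩
    apply hα (gridPoly A) hmem (gridPoly_ne_zero A)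
    intro i
    rw [gridPoly_leadExp A ord hadm, gridDeg_apply, hA]
    simp only []
    rw [Finset.card_sdiff_of_subset (hYX i)]
    exact (htop i).1

lemma aux_lower {K : Type*} [Field K] {n : ℕ} (X Y : Fin n → Finset K)
    (ord : LinearOrder (Fin n →₀ ℕ)) (hadm : Admissible ord)
    (hfin : (stdMon ord (vanishingIdealOn
      {z : Fin n → K | (∀ i, z i ∈ X i) ∧ ¬ (∀ i, z i ∈ Y i)})).Finite) :
    {z : Fin n → K | (∀ i, z i ∈ X i) ∧ ¬ (∀ i, z i ∈ Y i)}.ncard ≤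
      (stdMon ord (vanishingIdealOn
        {z : Fin n → K | (∀ i, z i ∈ X i) ∧ ¬ (∀ i, z i ∈ Y i)})).ncard := by
  classical
  set Pset := {z : Fin n → K | (∀ i, z i ∈ X i) ∧ ¬ (∀ i, z i ∈ Y i)} with hPset
  set J := vanishingIdealOn Pset with hJ
  set pf : Finset (Fin n → K) := Fintype.piFinset X \ Fintype.piFinset Y with hpf
  have hPeq : Pset = ↑pf := by
    ext z
    simp [hPset, hpf, Fintype.mem_piFinset]
  set E : MvPolynomial (Fin n) K →ₗ[K] ({z // z ∈ pf} → K) :=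
    { toFun := fun f z => eval z.1 f
      map_add' := fun f g => by funext z; simp
      map_smul' := fun c f => by funext z; simp [MvPolynomial.smul_eq_C_mul] } with hE
  have hEJ : ∀ p ∈ J, E p = 0 := by
    intro p hp
    funext z
    have hz : z.1 ∈ Pset := by rw [hPeq]; exact z.2
    exact hp z.1 hz
  have key : ∀ z : {z // z ∈ pf}, ∃ p : MvPolynomial (Fin n) K,
      ∀ w : {z // z ∈ pf}, eval w.1 p = if w = z then 1 else 0 := by
    intro z
    have hneq : ∀ w ∈ pf.erase z.1, ∃ i, z.1 i ≠ w i := by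
      intro w hw
      exact Function.ne_iff.mp (Ne.symm (Finset.mem_erase.mp hw).1)
    choose idx hidx using hneq
    refine ⟨∏ w ∈ (pf.erase z.1).attach,
      C (z.1 (idx w.1 w.2) - w.1 (idx w.1 w.2))⁻¹ *
        (MvPolynomial.X (idx w.1 w.2) - C (w.1 (idx w.1 w.2))), ?_⟩
    intro w
    by_cases hwz : w = z
    · rw [if_pos hwz, hwz, map_prod]
      apply Finset.prod_eq_one
      intro u _
      simp only [map_mul, eval_C, map_sub, eval_X]
      exact inv_mul_cancel₀ (sub_ne_zero.mpr (hidx u.1 u.2))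
    · rw [if_neg hwz, map_prod]
      have hw' : w.1 ∈ pf.erase z.1 :=
        Finset.mem_erase.mpr ⟨fun h => hwz (Subtype.ext h), w.2⟩
      apply Finset.prod_eq_zero (Finset.mem_attach _ (⟨w.1, hw'⟩ : {x // x ∈ pf.erase z.1}))
      simp only [map_mul, eval_C, map_sub, eval_X]
      rw [sub_self, mul_zero]
  choose L hL using key
  have hsurj : ∀ v : {z // z ∈ pf} → K, ∃ p, E p = v := by
    intro v
    refine ⟨∑ z : {z // z ∈ pf}, C (v z) * L z, ?_⟩
    funext w
    show eval w.1 _ = v w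
    rw [map_sum]
    rw [Finset.sum_eq_single w]
    · rw [map_mul, eval_C, hL w w, if_pos rfl, mul_one]
    · intro z _ hzw
      rw [map_mul, eval_C, hL z w, if_neg (fun h => hzw h.symm), mul_zero]
    · intro h; exact absurd (Finset.mem_univ w) h
  set smF := hfin.toFinset with hsmF
  set T : Finset ({z // z ∈ pf} → K) := smF.image (fun α => E (monomial α 1)) with hT
  have hspan : Submodule.span K (↑T : Set ({z // z ∈ pf} → K)) = ⊤ := by
    rw [eq_top_iff]
    rintro v -
    obtain ⟨p, hp⟩ := hsurj v
    obtain ⟨r, hrJ, hrsupp⟩ := aux_span ord hadm J p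
    have hEr : E r = v := by
      have h0 := hEJ _ hrJ
      rw [map_sub] at h0
      rw [← hp]
      have := sub_eq_zero.mp h0
      exact this.symm
    rw [← hEr]
    have hr : r = ∑ α ∈ r.support, (coeff α r) • monomial α (1:K) := by
      conv_lhs => rw [r.as_sum]
      refine Finset.sum_congr rfl fun α _ => ?_
      rw [smul_monomial, smul_eq_mul, mul_one]
    rw [hr, map_sum]
    apply Submodule.sum_mem
    intro α hα
    rw [map_smul]
    refine Submodule.smul_mem _ _ (Submodule.subset_span ?_)
    exact Finset.mem_coe.mpr
      (Finset.mem_image_of_mem _ (hfin.mem_toFinset.mpr (hrsupp α hα)))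
  have h1 : Module.finrank K ({z // z ∈ pf} → K) = pf.card := by
    rw [Module.finrank_pi, Fintype.card_coe]
  have h2 : Module.finrank K ({z // z ∈ pf} → K) ≤ T.card := by
    have h3 := finrank_span_finset_le_card (R := K) T
    rw [Set.finrank] at h3
    calc Module.finrank K ({z // z ∈ pf} → K)
        = Module.finrank K (⊤ : Submodule K ({z // z ∈ pf} → K)) := (finrank_top K _).symm
      _ = Module.finrank K (Submodule.span K (↑T : Set ({z // z ∈ pf} → K))) := by rw [hspan]
      _ ≤ T.card := h3
  have hfinal : pf.card ≤ smF.card :=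
    le_trans (h1 ▸ h2) (le_trans Finset.card_image_le (le_refl _))
  rw [hPeq, Set.ncard_coe_finset, Set.ncard_eq_toFinset_card _ hfin]
  exact hfinal


/-- Standard monomials of the vanishing ideal of a punctured grid. -/
theorem stmt_17 {K : Type*} [Field K] {n : ℕ} (X Y : Fin n → Finset K)
    (hYX : ∀ i, Y i ⊆ X i)
    (ord : LinearOrder (Fin n →₀ ℕ)) (hadm : Admissible ord) :
    stdMon ord (vanishingIdealOn {z | (∀ i, z i ∈ X i) ∧ ¬ (∀ i, z i ∈ Y i)}) =
      {α : Fin n →₀ ℕ | (∀ i, α i < (X i).card) ∧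
        ¬ ∀ i, ((X i).card - (Y i).card ≤ α i ∧ α i < (X i).card)} ∧
    (stdMon ord
        (vanishingIdealOn {z | (∀ i, z i ∈ X i) ∧ ¬ (∀ i, z i ∈ Y i)})).ncard =
      ∏ i, (X i).card - ∏ i, (Y i).card ∧
    ∏ i, (X i).card - ∏ i, (Y i).card =
      {z : Fin n → K | (∀ i, z i ∈ X i) ∧ ¬ (∀ i, z i ∈ Y i)}.ncard := by
  have hba : ∀ i, (Y i).card ≤ (X i).card := fun i => Finset.card_le_card (hYX i)
  obtain ⟨hSfin, hScard⟩ := aux_S (fun i => (X i).card) (fun i => (Y i).card) hba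
  have hsub := aux_upper X Y hYX ord hadm
  have hfin : (stdMon ord (vanishingIdealOn
      {z : Fin n → K | (∀ i, z i ∈ X i) ∧ ¬ (∀ i, z i ∈ Y i)})).Finite :=
    Set.Finite.subset hSfin hsub
  have hP := aux_P X Y hYX
  have hlow := aux_lower X Y ord hadm hfin
  have heq : stdMon ord (vanishingIdealOn
      {z : Fin n → K | (∀ i, z i ∈ X i) ∧ ¬ (∀ i, z i ∈ Y i)}) =
      {α : Fin n →₀ ℕ | (∀ i, α i < (X i).card) ∧
        ¬ ∀ i, ((X i).card - (Y i).card ≤ α i ∧ α i < (X i).card)} := by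
    refine Set.eq_of_subset_of_ncard_le hsub ?_ hSfin
    calc ({α : Fin n →₀ ℕ | (∀ i, α i < (X i).card) ∧
        ¬ ∀ i, ((X i).card - (Y i).card ≤ α i ∧ α i < (X i).card)}).ncard
        = ∏ i, (X i).card - ∏ i, (Y i).card := hScard
      _ = {z : Fin n → K | (∀ i, z i ∈ X i) ∧ ¬ (∀ i, z i ∈ Y i)}.ncard := hP.symm
      _ ≤ _ := hlow
  refine ⟨heq, ?_, hP.symm⟩
  rw [heq]
  exact hScard
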